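/- arXiv:1912.12343 — 2 statements merged into one kernel-verified Lean document; each statement's English description precedes it below -/
import Mathlib

section
/- For every n ≥ 1 and every k ∈ Comp(n,n), the asymmetric multinomial coefficient ⟨⟨n;k⟩⟩ is nonzero if and only if k is Catalan. -/
open Finset

/-- The operation k ↦ k̃_j (0-based index `j`): decrease the `j`-th entry by 1,
then delete the leftmost zero entry of the resulting tuple. -/
def ktilde (k : List ℕ) (j : ℕ) : List ℕ :=
  (k.set j (k.getD j 0 - 1)).erase 0

/-- The asymmetric multinomial coefficient ⟨⟨n;k⟩⟩, defined by ⟨⟨1;(1)⟩⟩ = 1 and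
⟨⟨n;k⟩⟩ = Σ_{j=1}^{i_k-1} ⟨⟨n-1;k̃_j⟩⟩, where i_k is the (1-based) position of the
leftmost zero of k (i_k = n+1 if there is no zero), so that the sum has
`k.indexOf 0` terms (0-based j). -/
def amc : ℕ → List ℕ → ℕ
  | 0, _ => 0
  | 1, k => if k = [1] then 1 else 0
  | n + 2, k => ∑ j ∈ Finset.range (k.idxOf 0), amc (n + 1) (ktilde k j)

/-- `f : Fin n → Fin n` (0-based labels and columns) is a parking function:
for every `i ≤ n` at least `i` labels lie in the first `i` columns. -/
def IsParking (n : ℕ) (f : Fin n → Fin n) : Prop :=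
  ∀ i : ℕ, i ≤ n → i ≤ (univ.filter fun a => (f a : ℕ) < i).card

/-- The dominance index of the label `a`: the number of columns strictly to the left of
`a`'s column containing no label greater than `a`. -/
def domIndex {n : ℕ} (f : Fin n → Fin n) (a : Fin n) : ℕ :=
  (univ.filter fun c : Fin n => c < f a ∧ ∀ b, f b = c → b < a).card

/-- Column-restricted parking function: every (1-based) label `a+1` satisfies
`d_f(a) < a+1`. -/
def IsCPF (n : ℕ) (f : Fin n → Fin n) : Prop :=
  IsParking n f ∧ ∀ a : Fin n, domIndex f a < (a : ℕ) + 1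

/-- The list of column heights of `f`. -/
def colHeights {n : ℕ} (f : Fin n → Fin n) : List ℕ :=
  List.ofFn fun c : Fin n => (univ.filter fun a => f a = c).card

/-- The number of column-restricted parking functions of size `n`. -/
noncomputable def cpfCount (n : ℕ) : ℕ := Nat.card {f : Fin n → Fin n // IsCPF n f}

/-- The number of column-restricted parking functions of size `n` with column heights `k`. -/
noncomputable def cpfCountWith (n : ℕ) (k : List ℕ) : ℕ :=
  Nat.card {f : Fin n → Fin n // IsCPF n f ∧ colHeights f = k}

/-- A composition `k` of `n` of length `n` is Catalan if `k_1 + ⋯ + k_j ≥ j` for all `j < n`. -/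
def IsCatalan (n : ℕ) (k : List ℕ) : Prop :=
  ∀ j < n, j ≤ (k.take j).sum

/-!
Decrementing an entry `k_j` that precedes the first zero of `k` and then deleting the first zero
changes the partial sums in a controlled way: the first `j` of them are unchanged, and from the
position of the first zero of `k` on, the `i`-th partial sum of `k̃_j` is the `(i+1)`-st partial
sum of `k` minus one. Before the first zero of `k` every partial sum of `k` is at least its length
anyway, so if some `k̃_j` is Catalan then so is `k`; conversely, if `k` is Catalan then so is `k̃_j`
for `j` the position just before the first zero. Since `⟨⟨n;k⟩⟩` is a sum of the natural numbers
`⟨⟨n-1;k̃_j⟩⟩`, induction on `n` concludes.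
-/

namespace List

variable {α : Type*} [BEq α] [LawfulBEq α] {l : List α} {a : α} {i j : ℕ}

theorem take_erase_of_le_idxOf (h : i ≤ l.idxOf a) : (l.erase a).take i = l.take i := by
  induction l generalizing i with
  | nil => simp
  | cons x t ih =>
    cases i with
    | zero => simp
    | succ i =>
      by_cases hx : x = a
      · simp [hx] at h
      · simp_all

theorem sum_take_erase_zero_of_idxOf_le {M : Type*} [AddMonoid M] [BEq M] [LawfulBEq M]
    {l : List M} (h : l.idxOf 0 ≤ i) : ((l.erase 0).take i).sum = (l.take (i + 1)).sum := by
  induction l generalizing i with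
  | nil => simp
  | cons x t ih =>
    by_cases hx : x = 0
    · simp [hx]
    · cases i with
      | zero => simp [hx] at h
      | succ i => simp_all

theorem notMem_take_of_le_idxOf (h : i ≤ l.idxOf a) : a ∉ l.take i := by
  by_cases ha : a ∈ l
  · rw [mem_take_iff_idxOf_lt ha]; omega
  · exact fun h' => ha (mem_of_mem_take h')

theorem getElem_ne_of_lt_idxOf (h : i < l.idxOf a) : l[i]'(h.trans_le idxOf_le_length) ≠ a := by
  simpa using not_of_lt_findIdx h

theorem le_idxOf_set (h : j ≤ l.idxOf a) (b : α) : j ≤ (l.set j b).idxOf a := by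
  induction l generalizing j with
  | nil => simp_all
  | cons x t ih =>
    cases j with
    | zero => simp
    | succ j =>
      by_cases hx : x = a
      · simp [hx] at h
      · simp_all

theorem idxOf_set_le (h : j ≠ l.idxOf a) (b : α) : (l.set j b).idxOf a ≤ l.idxOf a := by
  induction l generalizing j with
  | nil => simp
  | cons x t ih =>
    cases j with
    | zero => by_cases hx : x = a <;> by_cases hb : b = a <;> simp_all
    | succ j =>
      by_cases hx : x = a
      · simp [hx]
      · simp_all

theorem sum_take_set_add {M : Type*} [AddCommMonoid M] {l : List M} (hj : j < i)
    (hjl : j < l.length) (b : M) : ((l.set j b).take i).sum + l[j] = (l.take i).sum + b := by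
  have hjt : j < (l.take i).length := by simp [hj, hjl]
  have hset := sum_set (l.take i) j b
  have hself := sum_set (l.take i) j (l.take i)[j]
  rw [set_getElem_self, getElem_take] at hself
  rw [take_set, hset, hself]
  simp only [hjt, if_true]
  abel

theorem length_le_sum_of_zero_notMem {l : List ℕ} (h : 0 ∉ l) : l.length ≤ l.sum :=
  length_le_sum_of_one_le l fun _ hx => Nat.one_le_iff_ne_zero.mpr fun hx0 => h (hx0 ▸ hx)

end List

open List

section Ktilde

variable {k : List ℕ} {i j n : ℕ}

theorem le_sum_take_of_le_idxOf (h : i ≤ k.idxOf 0) : i ≤ (k.take i).sum := by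
  have hlen : (k.take i).length = i := length_take_of_le (h.trans idxOf_le_length)
  have := length_le_sum_of_zero_notMem (notMem_take_of_le_idxOf h)
  rwa [hlen] at this

theorem take_ktilde_of_le (hj : j ≤ k.idxOf 0) (hi : i ≤ j) : (ktilde k j).take i = k.take i := by
  rw [ktilde, take_erase_of_le_idxOf (hi.trans (le_idxOf_set hj _)), take_set_of_le hi]

theorem sum_take_ktilde_add_one (hj : j < k.idxOf 0) (hi : k.idxOf 0 ≤ i) :
    ((ktilde k j).take i).sum + 1 = (k.take (i + 1)).sum := by
  have hjl : j < k.length := hj.trans_le idxOf_le_length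
  have hkj : k[j] ≠ 0 := getElem_ne_of_lt_idxOf hj
  have hz : (k.set j (k.getD j 0 - 1)).idxOf 0 ≤ i := (idxOf_set_le hj.ne _).trans hi
  rw [ktilde, sum_take_erase_zero_of_idxOf_le hz]
  have := sum_take_set_add (by omega : j < i + 1) hjl (k.getD j 0 - 1)
  rw [getD_eq_getElem _ _ hjl] at this ⊢
  omega

theorem sum_ktilde_add_one (hj : j < k.idxOf 0) : (ktilde k j).sum + 1 = k.sum := by
  have hlen : (ktilde k j).length ≤ k.length := length_erase_le.trans (length_set ..).le
  have := sum_take_ktilde_add_one hj (idxOf_le_length (l := k))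
  rwa [take_of_length_le hlen, take_of_length_le (by omega)] at this

theorem length_ktilde_add_one (hj : j < k.idxOf 0) (hsum : k.sum = k.length) :
    (ktilde k j).length + 1 = k.length := by
  have hmem : 0 ∈ k.set j (k.getD j 0 - 1) := by
    by_contra h
    have hle := length_le_sum_of_zero_notMem h
    have hsum' := sum_ktilde_add_one hj
    rw [ktilde, erase_of_not_mem h] at hsum'
    rw [length_set] at hle
    omega
  rw [ktilde, length_erase_of_mem hmem, length_set]
  have := hj.trans_le idxOf_le_length
  omega

theorem IsCatalan.of_ktilde (hj : j < k.idxOf 0) (h : IsCatalan n (ktilde k j)) :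
    IsCatalan (n + 1) k := by
  intro t ht
  rcases le_or_gt t (k.idxOf 0) with hle | hlt
  · exact le_sum_take_of_le_idxOf hle
  · obtain ⟨s, rfl⟩ := Nat.exists_eq_add_of_lt hlt
    have := sum_take_ktilde_add_one hj (by omega : k.idxOf 0 ≤ k.idxOf 0 + s)
    have := h (k.idxOf 0 + s) (by omega)
    omega

theorem IsCatalan.idxOf_pos (h : IsCatalan (n + 2) k) : 0 < k.idxOf 0 := by
  have h1 := h 1 (by omega)
  cases k with
  | nil => simp at h1
  | cons x t =>
    have hx : x ≠ 0 := Nat.one_le_iff_ne_zero.mp (by simpa using h1)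
    simp [hx]

theorem IsCatalan.ktilde_pred_idxOf (h : IsCatalan (n + 2) k) :
    IsCatalan (n + 1) (ktilde k (k.idxOf 0 - 1)) := by
  have hj : k.idxOf 0 - 1 < k.idxOf 0 := Nat.sub_one_lt_of_lt h.idxOf_pos
  intro i hi
  rcases le_or_gt i (k.idxOf 0 - 1) with hle | hlt
  · rw [take_ktilde_of_le hj.le hle]
    exact h i (by omega)
  · have := sum_take_ktilde_add_one hj (by omega : k.idxOf 0 ≤ i)
    have := h (i + 1) (by omega)
    omega

theorem isCatalan_iff_exists_ktilde :
    IsCatalan (n + 2) k ↔ ∃ j < k.idxOf 0, IsCatalan (n + 1) (ktilde k j) :=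
  ⟨fun h => ⟨_, Nat.sub_one_lt_of_lt h.idxOf_pos, h.ktilde_pred_idxOf⟩,
    fun ⟨_, hj, h⟩ => h.of_ktilde hj⟩

end Ktilde

theorem amc_ne_zero_iff_isCatalan (n : ℕ) {k : List ℕ} (hlen : k.length = n + 1)
    (hsum : k.sum = n + 1) : amc (n + 1) k ≠ 0 ↔ IsCatalan (n + 1) k := by
  induction n generalizing k with
  | zero =>
    obtain ⟨x, rfl⟩ := List.length_eq_one_iff.mp hlen
    obtain rfl : x = 1 := by simpa using hsum
    simp [amc, IsCatalan]
  | succ n ih =>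
    rw [amc, isCatalan_iff_exists_ktilde]
    simp only [Ne, Finset.sum_eq_zero_iff, Finset.mem_range, not_forall, exists_prop]
    refine exists_congr fun j => and_congr_right fun hj => ?_
    exact ih (by have := length_ktilde_add_one hj (hsum.trans hlen.symm); omega)
      (by have := sum_ktilde_add_one hj; omega)

/-- For every n ≥ 1 and k ∈ Comp(n,n), ⟨⟨n;k⟩⟩ ≠ 0 iff k is Catalan. -/
theorem statement5 (n : ℕ) (hn : 1 ≤ n) (k : List ℕ)
    (hlen : k.length = n) (hsum : k.sum = n) :
    amc n k ≠ 0 ↔ IsCatalan n k := by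
  obtain ⟨m, rfl⟩ := Nat.exists_eq_add_of_le' hn
  exact amc_ne_zero_iff_isCatalan m hlen hsum
end

section
/- Let n ≥ 2, let k ∈ Comp(n,n), and let 1 ≤ j < i_k. Then the number of column-restricted parking functions in CPF(n,k) in which the label 1 lies in column j equals |CPF(n−1, k̃_j)|; that is, #{f ∈ CPF(n,k) : f(1) = j} = |CPF(n−1, k̃_j)|. -/
/-!
Write `extendPF p m F` for the function sending label `0` to column `p` and label `a + 1` to
column `m.succAbove (F a)`: it arises from `F` by inserting an empty column at `m`, raising every
label by one and putting the new label `0` into column `p`. If `f` has heights `k` and `f 0 = p`,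
let `m` be the leftmost zero of `k` with `k_p` lowered by one. Column `m` of `f` holds at most
label `0`, so `f = extendPF p m F` for a unique `F`, and the heights of `F` are `k̃_p`.

Since `p ≤ m` and every column of `F` left of `m` is nonempty, `f` is a parking function iff
`F` is: the prefix counts differ only by label `0`, and prefixes ending left of `m` are filled
column by column. Similarly the dominance index of `a + 1` in `f` is that of `a` in `F`, plus one
exactly when `a + 1` sits right of column `m`; and if every column left of the column of a label
is nonempty, its dominance index is at most the number of smaller labels. Hence `f` is
column-restricted iff `F` is.
-/

open Finset

theorem Fin.val_succAbove {n : ℕ} (m : Fin (n + 1)) (c : Fin n) :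
    (m.succAbove c : ℕ) = if (c : ℕ) < m then (c : ℕ) else (c : ℕ) + 1 := by
  split_ifs with hc
  · rw [Fin.succAbove_of_castSucc_lt _ _ (by simpa [Fin.lt_def] using hc)]; rfl
  · rw [Fin.succAbove_of_le_castSucc _ _ (by simpa [Fin.le_def] using hc)]; rfl

namespace List

variable {α : Type*}

theorem set_ofFn {n : ℕ} (g : Fin n → α) (i : Fin n) (v : α) :
    (ofFn g).set i v = ofFn (Function.update g i v) := by
  apply ext_getElem (by simp)
  intro c h₁ h₂
  simp [getElem_set, Function.update_apply, Fin.ext_iff, eq_comm]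

theorem eraseIdx_ofFn {n : ℕ} (g : Fin (n + 1) → α) (m : Fin (n + 1)) :
    (ofFn g).eraseIdx m = ofFn (g ∘ m.succAbove) := by
  apply ext_getElem (by simp [length_eraseIdx_of_lt, m.is_le])
  intro c h₁ h₂
  simp only [getElem_eraseIdx, List.getElem_ofFn, Function.comp_apply]
  split_ifs with hc <;> congr 1 <;> ext <;> simp [Fin.val_succAbove, hc]

theorem idxOf_zero_lt_length_of_sum_lt {l : List ℕ} (h : l.sum < l.length) :
    l.idxOf 0 < l.length :=
  idxOf_lt_length_iff.mpr <| by
    by_contra h0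
    exact (length_le_sum_of_one_le l fun i hi => Nat.one_le_iff_ne_zero.mpr
      fun hi0 => h0 (hi0 ▸ hi)).not_gt h

variable [BEq α] [LawfulBEq α] {n : ℕ} {g : Fin n → α} {a : α}

theorem ofFn_apply_ne_of_lt_idxOf {c : Fin n} (h : (c : ℕ) < (ofFn g).idxOf a) : g c ≠ a := by
  simpa using not_of_lt_findIdx h

theorem ofFn_apply_idxOf (h : (ofFn g).idxOf a < n) : g ⟨(ofFn g).idxOf a, h⟩ = a := by
  have := getElem_idxOf (xs := ofFn g) (by simpa using h)
  rwa [List.getElem_ofFn] at this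

end List

section ColumnCounts

variable {n : ℕ}

def colHeight (f : Fin n → Fin n) (c : Fin n) : ℕ := #{a | f a = c}

theorem colHeights_eq_ofFn_iff (f : Fin n → Fin n) (κ : Fin n → ℕ) :
    colHeights f = List.ofFn κ ↔ colHeight f = κ :=
  List.ofFn_inj

theorem colHeight_pos_iff (f : Fin n → Fin n) (c : Fin n) :
    0 < colHeight f c ↔ ∃ a, f a = c := by
  simp [colHeight, card_pos, filter_nonempty_iff]

theorem le_card_filter_lt_of_forall_exists {f : Fin n → Fin n} {i : ℕ} (hi : i ≤ n)
    (h : ∀ c : Fin n, (c : ℕ) < i → ∃ a, f a = c) : i ≤ #{a | (f a : ℕ) < i} :=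
  calc i = #{c : Fin n | (c : ℕ) < i} := by simp [Fin.card_filter_val_lt, hi]
    _ ≤ #(image f {a | (f a : ℕ) < i}) := card_le_card fun c hc => by
        obtain ⟨a, rfl⟩ := h c (by simpa using hc)
        exact mem_image_of_mem f (by simpa using hc)
    _ ≤ #{a | (f a : ℕ) < i} := card_image_le

theorem domIndex_le_of_forall_exists {f : Fin n → Fin n} {a : Fin n}
    (h : ∀ c < f a, ∃ b, f b = c) : domIndex f a ≤ a :=
  calc domIndex f a ≤ #(image f (Iio a)) := card_le_card fun c hc => by
        simp only [mem_filter, mem_univ, true_and] at hc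
        obtain ⟨b, rfl⟩ := h c hc.1
        exact mem_image_of_mem f (mem_Iio.mpr (hc.2 b rfl))
    _ ≤ #(Iio a) := card_image_le
    _ = a := Fin.card_Iio a

theorem succ_ne_of_colHeight_le {f : Fin (n + 1) → Fin (n + 1)} {c : Fin (n + 1)}
    (h : colHeight f c ≤ if f 0 = c then 1 else 0) (a : Fin n) : f a.succ ≠ c := by
  intro hfa
  rw [colHeight, card_filter, Fin.sum_univ_succ] at h
  have := single_le_sum (f := fun b : Fin n => if f b.succ = c then 1 else 0)
    (fun _ _ => Nat.zero_le _) (mem_univ a)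
  simp only [hfa, if_true] at this
  omega

end ColumnCounts

section Extension

variable {n : ℕ} (p m : Fin (n + 1)) (F : Fin n → Fin n)

def extendPF : Fin (n + 1) → Fin (n + 1) :=
  Fin.cons p (m.succAbove ∘ F)

@[simp]
theorem extendPF_zero : extendPF p m F 0 = p := Fin.cons_zero _ _

@[simp]
theorem extendPF_succ (a : Fin n) : extendPF p m F a.succ = m.succAbove (F a) :=
  Fin.cons_succ _ _ _

theorem extendPF_injective : Function.Injective (extendPF (n := n) p m) :=
  fun F G h => funext fun a =>
    Fin.succAbove_right_injective (p := m) (by simpa using congrFun h a.succ)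

theorem card_filter_extendPF (P : Fin (n + 1) → Prop) (Q : Fin n → Prop)
    [DecidablePred P] [DecidablePred Q] (hPQ : ∀ c, P (m.succAbove c) ↔ Q c) :
    #{b | P (extendPF p m F b)} = (if P p then 1 else 0) + #{a | Q (F a)} := by
  simp only [card_filter, Fin.sum_univ_succ, extendPF_zero, extendPF_succ, hPQ]

theorem colHeight_extendPF_self : colHeight (extendPF p m F) m = if p = m then 1 else 0 := by
  simpa [colHeight] using card_filter_extendPF p m F (· = m) (fun _ => False)
    fun c => iff_false_intro (Fin.succAbove_ne m c)

theorem colHeight_extendPF_succAbove (c : Fin n) :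
    colHeight (extendPF p m F) (m.succAbove c)
      = (if p = m.succAbove c then 1 else 0) + colHeight F c :=
  card_filter_extendPF p m F (· = m.succAbove c) (· = c) fun _ => Fin.succAbove_right_inj

theorem card_filter_extendPF_lt {i : ℕ} (hi : i ≤ m) :
    #{b | (extendPF p m F b : ℕ) < i}
      = (if (p : ℕ) < i then 1 else 0) + #{a | (F a : ℕ) < i} :=
  card_filter_extendPF p m F (fun x => (x : ℕ) < i) (fun x => (x : ℕ) < i) fun c => by
    rw [Fin.val_succAbove]; split_ifs <;> omega

theorem card_filter_extendPF_lt_succ {i : ℕ} (hi : m ≤ i) :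
    #{b | (extendPF p m F b : ℕ) < i + 1}
      = (if (p : ℕ) < i + 1 then 1 else 0) + #{a | (F a : ℕ) < i} :=
  card_filter_extendPF p m F (fun x => (x : ℕ) < i + 1) (fun x => (x : ℕ) < i) fun c => by
    rw [Fin.val_succAbove]; split_ifs <;> omega

theorem domIndex_extendPF_succ (a : Fin n) :
    domIndex (extendPF p m F) a.succ
      = (if m < m.succAbove (F a) then 1 else 0) + domIndex F a := by
  simp only [domIndex, card_filter, Fin.sum_univ_succAbove _ m, Fin.forall_fin_succ,
    extendPF_zero, extendPF_succ, Fin.succAbove_right_inj, Fin.succAbove_lt_succAbove_iff,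
    Fin.succ_lt_succ_iff, Fin.succ_pos, implies_true, true_and, Fin.succAbove_ne, false_imp_iff,
    and_true]

end Extension

section Restriction

variable {n : ℕ} {p m : Fin (n + 1)} {F : Fin n → Fin n}

theorem isParking_extendPF_iff (hpm : p ≤ m)
    (hm : ∀ c : Fin n, c.castSucc < m → ∃ a, F a = c) :
    IsParking (n + 1) (extendPF p m F) ↔ IsParking n F := by
  have hp : ∀ i, (m : ℕ) ≤ i → (p : ℕ) < i + 1 := fun i hi => by
    rw [Fin.le_def] at hpm; omega
  constructor
  · intro hf i hi
    rcases lt_or_ge i m with him | him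
    · exact le_card_filter_lt_of_forall_exists hi fun c hc =>
        hm c (by rw [Fin.lt_def, Fin.val_castSucc]; omega)
    · have := hf (i + 1) (by omega)
      rw [card_filter_extendPF_lt_succ p m F him, if_pos (hp i him)] at this
      omega
  · intro hF i hi
    rcases le_or_gt i m with him | him
    · rw [card_filter_extendPF_lt p m F him]
      have := hF i (by omega)
      omega
    · obtain ⟨i, rfl⟩ : ∃ i', i = i' + 1 := ⟨i - 1, by omega⟩
      rw [card_filter_extendPF_lt_succ p m F (by omega), if_pos (hp i (by omega))]
      have := hF i (by omega)
      omega

theorem domIndex_extendPF_lt_iff (hpm : p ≤ m)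
    (hm : ∀ c : Fin n, c.castSucc < m → ∃ a, F a = c) :
    (∀ b, domIndex (extendPF p m F) b < b + 1) ↔ ∀ a, domIndex F a < a + 1 := by
  rw [Fin.forall_fin_succ]
  constructor
  · rintro ⟨-, hf⟩ a
    by_cases hFa : (F a).castSucc < m
    · have := domIndex_le_of_forall_exists fun c hc =>
        hm c ((Fin.castSucc_lt_castSucc_iff.mpr hc).trans hFa)
      omega
    · have := hf a
      rw [domIndex_extendPF_succ, Fin.val_succ,
        if_pos ((Fin.lt_succAbove_iff_le_castSucc m (F a)).mpr (not_lt.mp hFa))] at this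
      omega
  · intro hF
    refine ⟨?_, fun a => ?_⟩
    · have := domIndex_le_of_forall_exists (f := extendPF p m F) (a := 0) fun c hc => by
        obtain ⟨c, rfl⟩ : ∃ c' : Fin n, c'.castSucc = c :=
          ⟨c.castPred (Fin.ne_last_of_lt (hc.trans_le hpm)), Fin.castSucc_castPred _ _⟩
        obtain ⟨a, ha⟩ := hm c (hc.trans_le hpm)
        refine ⟨a.succ, ?_⟩
        rw [extendPF_succ, ha, Fin.succAbove_of_castSucc_lt _ _ (hc.trans_le hpm)]
      simp only [Fin.val_zero] at this ⊢
      omega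
    · rw [domIndex_extendPF_succ, Fin.val_succ]
      have := hF a
      split_ifs <;> omega

theorem isCPF_extendPF_iff (hpm : p ≤ m)
    (hm : ∀ c : Fin n, c.castSucc < m → ∃ a, F a = c) :
    IsCPF (n + 1) (extendPF p m F) ↔ IsCPF n F :=
  and_congr (isParking_extendPF_iff hpm hm) (domIndex_extendPF_lt_iff hpm hm)

end Restriction

section Counting

variable {n : ℕ} (p m : Fin (n + 1)) (κ κ' : Fin (n + 1) → ℕ)

theorem colHeight_extendPF_eq_iff (hκ : ∀ c, κ c = κ' c + if c = p then 1 else 0)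
    (hm : κ' m = 0) (F : Fin n → Fin n) :
    colHeight (extendPF p m F) = κ ↔ colHeight F = κ' ∘ m.succAbove := by
  simp only [funext_iff, Fin.forall_iff_succAbove m, colHeight_extendPF_self,
    colHeight_extendPF_succAbove, hκ, hm, Function.comp_apply, eq_comm (a := p), zero_add,
    true_and]
  exact forall_congr' fun c => by omega

theorem exists_extendPF_eq {f : Fin (n + 1) → Fin (n + 1)} (h0 : f 0 = p)
    (hsucc : ∀ a : Fin n, f a.succ ≠ m) : ∃ F, extendPF p m F = f := by
  choose F hF using fun a => Fin.exists_succAbove_eq (hsucc a)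
  exact ⟨F, funext fun b => Fin.cases (by simp [h0]) (by simp [hF]) b⟩

theorem card_cpf_extendPF (hκ : ∀ c, κ c = κ' c + if c = p then 1 else 0)
    (hm : κ' m = 0) (hpos : ∀ c : Fin n, c.castSucc < m → κ' c.castSucc ≠ 0)
    (hpm : p ≤ m) :
    Nat.card {F : Fin n → Fin n // IsCPF n F ∧ colHeight F = κ' ∘ m.succAbove}
      = Nat.card {f : Fin (n + 1) → Fin (n + 1) //
          (IsCPF (n + 1) f ∧ colHeight f = κ) ∧ f 0 = p} := by
  have filled {F : Fin n → Fin n} (hF : colHeight F = κ' ∘ m.succAbove) (c : Fin n)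
      (hc : c.castSucc < m) : ∃ a, F a = c := by
    rw [← colHeight_pos_iff, hF, Function.comp_apply, Fin.succAbove_of_castSucc_lt _ _ hc]
    exact Nat.pos_of_ne_zero (hpos c hc)
  refine Nat.card_eq_of_bijective (fun F => ⟨extendPF p m F.1, ?_, extendPF_zero p m F.1⟩)
    ⟨?_, ?_⟩
  · exact ⟨(isCPF_extendPF_iff hpm (filled F.2.2)).mpr F.2.1,
      (colHeight_extendPF_eq_iff p m κ κ' hκ hm F.1).mpr F.2.2⟩
  · exact fun F G h => Subtype.ext (extendPF_injective p m (congrArg Subtype.val h))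
  · rintro ⟨f, ⟨hcpf, hf⟩, h0⟩
    have hcol : colHeight f m ≤ if f 0 = m then 1 else 0 := by
      rw [hf, hκ, hm, h0]; simp [eq_comm]
    obtain ⟨F, rfl⟩ := exists_extendPF_eq p m h0 (succ_ne_of_colHeight_le hcol)
    have hF := (colHeight_extendPF_eq_iff p m κ κ' hκ hm F).mp hf
    exact ⟨⟨F, (isCPF_extendPF_iff hpm (filled hF)).mp hcpf, hF⟩, rfl⟩

end Counting

theorem ktilde_ofFn {n : ℕ} (κ : Fin (n + 1) → ℕ) (p m : Fin (n + 1))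
    (hm : (List.ofFn (Function.update κ p (κ p - 1))).idxOf 0 = m) :
    ktilde (List.ofFn κ) p = List.ofFn (Function.update κ p (κ p - 1) ∘ m.succAbove) := by
  rw [ktilde, List.getD_eq_getElem _ _ (by simp [p.is_le]), List.getElem_ofFn, List.set_ofFn,
    ← List.eraseIdx_idxOf_eq_erase, hm, List.eraseIdx_ofFn]

theorem card_cpf_head_eq {N : ℕ} (κ : Fin (N + 1) → ℕ) (p : Fin (N + 1))
    (hsum : ∑ c, κ c = N + 1) (hp : (p : ℕ) < (List.ofFn κ).idxOf 0) :
    Nat.card {f // (IsCPF (N + 1) f ∧ colHeight f = κ) ∧ f 0 = p}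
      = cpfCountWith N (ktilde (List.ofFn κ) p) := by
  set κ' := Function.update κ p (κ p - 1)
  have hκ : ∀ c, κ c = κ' c + if c = p then 1 else 0 := fun c => by
    have := List.ofFn_apply_ne_of_lt_idxOf hp
    simp only [κ', Function.update_apply]
    split_ifs with hc
    · subst hc; omega
    · rfl
  have hmlt : (List.ofFn κ').idxOf 0 < N + 1 := by
    simpa using List.idxOf_zero_lt_length_of_sum_lt (l := List.ofFn κ') (by
      rw [Finset.sum_congr rfl fun c _ => hκ c, sum_add_distrib] at hsum
      simp only [sum_ite_eq', mem_univ, if_true, Nat.add_right_cancel_iff] at hsum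
      rw [List.sum_ofFn, List.length_ofFn, hsum]
      exact N.lt_succ_self)
  set m : Fin (N + 1) := ⟨_, hmlt⟩
  have hm : κ' m = 0 := List.ofFn_apply_idxOf hmlt
  have hpm : p ≤ m := by
    by_contra! hmp
    have hκm : κ m = 0 := by simpa only [κ', Function.update_of_ne hmp.ne] using hm
    exact List.ofFn_apply_ne_of_lt_idxOf ((Fin.lt_def.mp hmp).trans hp) hκm
  rw [ktilde_ofFn κ p m rfl, cpfCountWith]
  simp only [colHeights_eq_ofFn_iff]
  exact (card_cpf_extendPF p m κ κ' hκ hm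
    (fun c hc => List.ofFn_apply_ne_of_lt_idxOf hc) hpm).symm

/-- Let n ≥ 2, k ∈ Comp(n,n) and 1 ≤ j < i_k (j 1-based, i_k = k.indexOf 0 + 1).
Then #{f ∈ CPF(n,k) : f(1) = j} = |CPF(n-1, k̃_j)|. -/
theorem statement8 (n : ℕ) (hn : 2 ≤ n) (k : List ℕ)
    (hlen : k.length = n) (hsum : k.sum = n)
    (j : ℕ) (hj1 : 1 ≤ j) (hj2 : j < k.idxOf 0 + 1) :
    Nat.card {f : Fin n → Fin n //
        (IsCPF n f ∧ colHeights f = k) ∧ (f ⟨0, by omega⟩ : ℕ) + 1 = j} =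
      cpfCountWith (n - 1) (ktilde k (j - 1)) := by
  obtain ⟨N, rfl⟩ : ∃ N, n = N + 1 := ⟨n - 1, by omega⟩
  obtain ⟨p, rfl⟩ : ∃ p, j = p + 1 := ⟨j - 1, by omega⟩
  obtain ⟨κ, rfl⟩ : ∃ κ : Fin (N + 1) → ℕ, k = List.ofFn κ :=
    ⟨fun c => k[c], List.ext_getElem (by simp [hlen]) fun _ _ h => (List.getElem_ofFn h).symm⟩
  have hp : p < N + 1 := by
    have := List.idxOf_le_length (l := List.ofFn κ) (a := 0)
    rw [List.length_ofFn] at this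
    omega
  rw [Nat.add_sub_cancel, Nat.add_sub_cancel,
    ← card_cpf_head_eq κ ⟨p, hp⟩ (by rwa [List.sum_ofFn] at hsum) (by simpa using hj2)]
  simp only [colHeights_eq_ofFn_iff]
  exact Nat.card_congr (Equiv.subtypeEquivRight fun f => by simp [Fin.ext_iff])
end
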